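/- arXiv:2009.10188 — 3 statements merged into one kernel-verified Lean document; each statement's English description precedes it below -/
import Mathlib

section
/- Let k be a field, A a finite-dimensional k-algebra, and P a faithful projective-injective finitely generated left A-module. If (A, P) is a cover of End_A(P)^op, then A is a Morita algebra. -/
universe u

open MulOpposite

set_option synthInstance.maxHeartbeats 400000
set_option maxHeartbeats 1000000

/-- `X ∈ add M`: `X` is a direct summand of a finite direct sum of copies of `M`.
`add M = add N` is rendered as the conjunction of `MemAdd R M N` and `MemAdd R N M`. -/
def MemAdd (R : Type u) [Ring R] (M : Type u) [AddCommGroup M] [Module R M]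
    (X : Type u) [AddCommGroup X] [Module R X] : Prop :=
  ∃ (n : ℕ) (i : X →ₗ[R] (Fin n → M)) (p : (Fin n → M) →ₗ[R] X),
    p ∘ₗ i = LinearMap.id

/-- `(A, P)` is a cover of `B = End_A(P)ᵒᵖ`: the Schur functor `Hom_A(P, -)` is fully
faithful on finitely generated projective `A`-modules.  Here a map
`Φ : Hom_A(P, M) → Hom_A(P, N)` is `B`-linear iff it is additive and commutes with
precomposition by every `A`-endomorphism of `P`, so the condition says that for all
finitely generated projective `M`, `N` the natural map
`Hom_A(M, N) → Hom_B(Hom_A(P, M), Hom_A(P, N))`, `g ↦ (f ↦ g ∘ f)`, is bijective. -/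
def IsCover (A : Type u) [Ring A] (P : Type u) [AddCommGroup P] [Module A P] : Prop :=
  ∀ (M N : Type u) [AddCommGroup M] [Module A M] [AddCommGroup N] [Module A N],
    Module.Finite A M → Module.Projective A M →
    Module.Finite A N → Module.Projective A N →
    (Function.Injective fun (g : M →ₗ[A] N) => fun f : P →ₗ[A] M => g ∘ₗ f) ∧
    (∀ Φ : (P →ₗ[A] M) → (P →ₗ[A] N),
      (∀ f₁ f₂, Φ (f₁ + f₂) = Φ f₁ + Φ f₂) →
      (∀ (f : P →ₗ[A] M) (g : P →ₗ[A] P), Φ (f ∘ₗ g) = Φ f ∘ₗ g) →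
      ∃ g : M →ₗ[A] N, ∀ f, Φ f = g ∘ₗ f)

/-- `M` is a generator over `R`: `R` is a direct summand of a finite direct sum of
copies of `M`. -/
def IsGenerator (R : Type u) [Ring R] (M : Type u) [AddCommGroup M] [Module R M] : Prop :=
  MemAdd R M R

/-- `A` is a Morita algebra over `k`: `A ≅ End_B(M)ᵒᵖ` as `k`-algebras, for some
self-injective finite-dimensional `k`-algebra `B` and some finitely generated
generator `M` over `B`. -/
def IsMoritaAlgebra (k A : Type u) [Field k] [Ring A] [Algebra k A] : Prop :=
  ∃ (B : Type u) (_ : Ring B) (_ : Algebra k B) (M : Type u)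
    (_ : AddCommGroup M) (_ : Module B M) (_ : Module k M)
    (_ : IsScalarTower k B M),
    FiniteDimensional k B ∧ Module.Injective B B ∧
    Module.Finite B M ∧ IsGenerator B M ∧
    Nonempty (A ≃ₐ[k] (Module.End B M)ᵐᵒᵖ)

/-!
Take `B = End_A(P)ᵒᵖ` and `M = Hom_A(P, A)`, with `B` acting by precomposition. Full
faithfulness of `Hom_A(P, -)` on `End_A(A) ≅ Aᵒᵖ` gives `A ≅ End_B(M)ᵒᵖ`. As `P` is a summand
of some `Aⁿ`, `B ≅ Hom_A(P, P)` is a summand of `Mⁿ`, so `M` is a generator. Self-injectivity of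
`B` comes from Baer's criterion: a `B`-linear `φ : I → B` on a left ideal gives two maps
`⊕_{x ∈ I} P → P`, namely `(p_x) ↦ ∑ x p_x` and `(p_x) ↦ ∑ φ(x) p_x`. Faithfulness of
`Hom_A(A, P) → Hom_B(M, Hom_A(P, P))` puts the kernel of the first inside that of the second,
and injectivity of `P` then yields `c ∈ End_A(P)` with `φ(x) = c ∘ x` for all `x ∈ I`.
-/

open LinearMap

section Precomposition

variable {A P : Type*} [Ring A] [AddCommGroup P] [Module A P]

instance precompModule (N : Type*) [AddCommGroup N] [Module A N] :
    Module (Module.End A P)ᵐᵒᵖ (P →ₗ[A] N) where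
  smul b f := f ∘ₗ b.unop
  one_smul _ := rfl
  mul_smul _ _ _ := rfl
  smul_zero _ := rfl
  smul_add _ _ _ := rfl
  add_smul _ _ f := ext fun _ => f.map_add _ _
  zero_smul f := ext fun _ => f.map_zero

instance smulCommClass_precomp {k N : Type*} [CommSemiring k] [AddCommGroup N] [Module A N]
    [Module k N] [SMulCommClass A k N] : SMulCommClass (Module.End A P)ᵐᵒᵖ k (P →ₗ[A] N) :=
  ⟨fun _ _ _ => rfl⟩

end Precomposition

theorem Module.Injective.exists_comp_eq_of_ker_le {R M N : Type*} {Q : Type u} [Ring R]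
    [AddCommGroup M] [Module R M] [AddCommGroup N] [Module R N] [AddCommGroup Q] [Module R Q]
    [Small.{u} R] [Module.Injective R Q] {f : M →ₗ[R] N} {g : M →ₗ[R] Q}
    (h : ker f ≤ ker g) : ∃ c : N →ₗ[R] Q, c ∘ₗ f = g := by
  obtain ⟨c, hc⟩ := Module.Injective.extension_property R Q _ N (range f).subtype
    (Submodule.injective_subtype _) ((ker f).liftQ g h ∘ₗ f.quotKerEquivRange.symm.toLinearMap)
  refine ⟨c, ext fun m => ?_⟩
  simpa [quotKerEquivRange_symm_apply_image] using congr($hc ⟨f m, mem_range_self f m⟩)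

section SelfInjective

variable {A P : Type u} [Ring A] [AddCommGroup P] [Module A P]

theorem IsCover.eq_zero_of_forall_smulRight_eq_zero [Module.Finite A P] [Module.Projective A P]
    (hcover : IsCover A P) {y : P}
    (hy : ∀ f : P →ₗ[A] A, f.smulRight y = 0) : y = 0 := by
  have hinj := (hcover A P inferInstance inferInstance ‹_› ‹_›).1
  have : toSpanSingleton A P y = 0 := hinj (funext hy)
  simpa using congr($this 1)

variable (hsep : ∀ y : P, (∀ f : P →ₗ[A] A, f.smulRight y = 0) → y = 0)
include hsep

theorem ker_lsum_le_ker_lsum {ι : Type*} {x y : ι → Module.End A P}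
    (hxy : ∀ (s : Finset ι) (t : ι → Module.End A P),
      ∑ i ∈ s, x i * t i = 0 → ∑ i ∈ s, y i * t i = 0) :
    ker (Finsupp.lsum ℕ x) ≤ ker (Finsupp.lsum ℕ y) := by
  intro v hv
  rw [mem_ker, Finsupp.lsum_apply, Finsupp.sum] at hv ⊢
  refine hsep _ fun f => ?_
  -- testing with `t i = f(-) • v i` turns `∑ x i * t i` into `f(-) • ∑ x i (v i)`
  have key := hxy v.support (fun i => f.smulRight (v i)) ?_
  · ext q
    simpa [← Finset.smul_sum] using congr($key q)
  · ext q
    simp [← Finset.smul_sum, hv]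

theorem exists_mul_eq_of_forall_sum_mul_eq_zero [Module.Injective A P] {ι : Type*}
    {x y : ι → Module.End A P}
    (hxy : ∀ (s : Finset ι) (t : ι → Module.End A P),
      ∑ i ∈ s, x i * t i = 0 → ∑ i ∈ s, y i * t i = 0) :
    ∃ c : Module.End A P, ∀ i, c * x i = y i := by
  obtain ⟨c, hc⟩ := Module.Injective.exists_comp_eq_of_ker_le (ker_lsum_le_ker_lsum hsep hxy)
  exact ⟨c, fun i => ext fun q => by simpa using congr($hc (Finsupp.single i q))⟩

theorem injective_endOp_self [Module.Injective A P] :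
    Module.Injective (Module.End A P)ᵐᵒᵖ (Module.End A P)ᵐᵒᵖ := by
  refine Module.Baer.injective fun I φ => ?_
  have hφ (s : Finset I) (t : I → Module.End A P)
      (hs : ∑ i ∈ s, (i : (Module.End A P)ᵐᵒᵖ).unop * t i = 0) :
      ∑ i ∈ s, (φ i).unop * t i = 0 := by
    have : ∑ i ∈ s, op (t i) • i = 0 := Subtype.ext (by simpa using congr(op $hs))
    simpa using congr(unop (φ $this))
  obtain ⟨c, hc⟩ := exists_mul_eq_of_forall_sum_mul_eq_zero hsep hφ
  exact ⟨toSpanSingleton _ _ (op c), fun b hb => unop_injective (hc ⟨b, hb⟩)⟩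

end SelfInjective

section Generator

variable {R : Type u} [Ring R]

theorem MemAdd.of_linearEquiv {M X Y : Type u} [AddCommGroup M] [Module R M]
    [AddCommGroup X] [Module R X] [AddCommGroup Y] [Module R Y]
    (h : MemAdd R M X) (e : X ≃ₗ[R] Y) : MemAdd R M Y := by
  obtain ⟨n, i, p, hpi⟩ := h
  refine ⟨n, i ∘ₗ e.symm.toLinearMap, e.toLinearMap ∘ₗ p, ?_⟩
  ext y
  simpa using congr(e ($hpi (e.symm y)))

variable {A P : Type u} [Ring A] [AddCommGroup P] [Module A P]

theorem MemAdd.precomp {N X : Type u} [AddCommGroup N] [Module A N]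
    [AddCommGroup X] [Module A X] (h : MemAdd A N X) :
    MemAdd (Module.End A P)ᵐᵒᵖ (P →ₗ[A] N) (P →ₗ[A] X) := by
  obtain ⟨n, i, p, hpi⟩ := h
  refine ⟨n,
    { toFun := fun f j => proj j ∘ₗ i ∘ₗ f
      map_add' := fun _ _ => by ext; simp
      map_smul' := fun _ _ => rfl },
    { toFun := fun F => p ∘ₗ pi F
      map_add' := fun _ _ => by ext; exact p.map_add _ _
      map_smul' := fun _ _ => rfl }, ?_⟩
  ext f q
  exact congr($hpi (f q))

variable (A P) in
def endOpLinearEquiv : (Module.End A P)ᵐᵒᵖ ≃ₗ[(Module.End A P)ᵐᵒᵖ] (P →ₗ[A] P) where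
  toFun := unop
  invFun := op
  map_add' _ _ := rfl
  map_smul' _ _ := rfl
  left_inv _ := rfl
  right_inv _ := rfl

theorem isGenerator_endOp [Module.Finite A P] [Module.Projective A P] :
    IsGenerator (Module.End A P)ᵐᵒᵖ (P →ₗ[A] A) := by
  obtain ⟨n, π, s, -, -, hπs⟩ := Module.Finite.exists_comp_eq_id_of_projective A P
  exact (MemAdd.precomp ⟨n, s, π, hπs⟩).of_linearEquiv (endOpLinearEquiv A P).symm

end Generator

section Algebra

variable {k A P N : Type u} [CommSemiring k] [Ring A] [Algebra k A]
  [AddCommGroup P] [Module A P] [Module k P] [IsScalarTower k A P]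
  [AddCommGroup N] [Module A N] [Module k N] [IsScalarTower k A N]

instance isScalarTower_precomp : IsScalarTower k (Module.End A P)ᵐᵒᵖ (P →ₗ[A] N) :=
  ⟨fun c b f => ext fun q => f.map_smul_of_tower c (b.unop q)⟩

variable (k A P N) in
def postcompAlgHom : Module.End A N →ₐ[k] Module.End (Module.End A P)ᵐᵒᵖ (P →ₗ[A] N) where
  toFun g :=
    { toFun := fun f => g ∘ₗ f
      map_add' := fun _ _ => comp_add _ _ g
      map_smul' := fun _ _ => rfl }
  map_one' := rfl
  map_mul' _ _ := rfl
  map_zero' := rfl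
  map_add' _ _ := rfl
  commutes' _ := rfl

theorem IsCover.bijective_postcompAlgHom (hcover : IsCover A P) [Module.Finite A N]
    [Module.Projective A N] : Function.Bijective (postcompAlgHom k A P N) := by
  obtain ⟨hinj, hsurj⟩ := hcover N N ‹_› ‹_› ‹_› ‹_›
  refine ⟨fun g g' h => hinj congr($h), fun Ψ => ?_⟩
  obtain ⟨g, hg⟩ := hsurj Ψ (map_add Ψ) fun f b => Ψ.map_smul (op b) f
  exact ⟨g, ext fun f => (hg f).symm⟩

end Algebra

theorem isMoritaAlgebra_of_isCover_general
    (k A P : Type u) [Field k] [Ring A] [Algebra k A] [FiniteDimensional k A]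
    [AddCommGroup P] [Module A P] [Module.Finite A P]
    (hproj : Module.Projective A P) (hinj : Module.Injective A P)
    (hcover : IsCover A P) :
    IsMoritaAlgebra k A := by
  let _ : Module k P := Module.compHom P (algebraMap k A)
  have : IsScalarTower k A P := .of_algebraMap_smul fun _ _ => rfl
  have : Module.Finite k P := .trans A P
  let B := (Module.End A P)ᵐᵒᵖ
  have hB : Module.Injective B B :=
    injective_endOp_self fun _ => hcover.eq_zero_of_forall_smulRight_eq_zero
  have hM : Module.Finite B (P →ₗ[A] A) := .of_restrictScalars_finite k _ _
  have e : A ≃ₐ[k] (Module.End B (P →ₗ[A] A))ᵐᵒᵖ := AlgEquiv.opComm.symm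
    ((AlgEquiv.moduleEndSelf k).trans (.ofBijective _ hcover.bijective_postcompAlgHom))
  exact ⟨B, _, _, P →ₗ[A] A, _, _, _, _, inferInstance, hB, hM, isGenerator_endOp, ⟨e⟩⟩

/-- If `P` is a faithful projective-injective finitely generated left `A`-module and
`(A, P)` is a cover of `End_A(P)ᵒᵖ`, then `A` is a Morita algebra. -/
theorem isMoritaAlgebra_of_isCover
    (k A P : Type u) [Field k] [Ring A] [Algebra k A] [FiniteDimensional k A]
    [AddCommGroup P] [Module A P] [Module.Finite A P]
    (hfaithful : ∀ a : A, (∀ p : P, a • p = 0) → a = 0)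
    (hproj : Module.Projective A P) (hinj : Module.Injective A P)
    (hcover : IsCover A P) :
    IsMoritaAlgebra k A :=
  isMoritaAlgebra_of_isCover_general k A P hproj hinj hcover
end

section
/- Let k be a field, A a finite-dimensional QF-1 k-algebra, and P a faithful projective-injective finitely generated left A-module. Then A is self-injective if and only if Hom_A(P, A) is a faithful right A-module (where the right A-action is by postmultiplication). -/
/-! The trace ideal `τ(P) = ∑_f f(P)` of `P` contains `1` exactly when `A` is a direct summand
of some `Pⁿ`. If `A` is self-injective, `A` embeds into `Pⁿ` through finitely many elements on
which `P` is already faithful (`A` is artinian); the embedding splits, so `1 = ∑ fᵢ(pᵢ)`, and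
this makes `Hom_A(P, A)` faithful. Conversely, if `Hom_A(P, A)` is faithful, there are no nonzero
maps between the projective module `P` and `A/τ(P)` in either direction, so the projection of
`P ⊕ A/τ(P)` onto `P` lies in the double centralizer. By QF-1 it is multiplication by some `a`;
faithfulness of `P` forces `a = 1`, hence `A/τ(P) = 0`, and `A` is a summand of the injective
module `Pⁿ`. -/

universe u

open MulOpposite

set_option synthInstance.maxHeartbeats 400000
set_option maxHeartbeats 1000000

/-- The canonical ring homomorphism from `A` to `End_B(M)`, where `B = End_A(M)ᵒᵖ` acts
on `M` by evaluation (so that `B`-linear endomorphisms of `M` are exactly the additive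
endomorphisms of `M` commuting with every `A`-linear endomorphism of `M`); it sends `a`
to the `B`-endomorphism `m ↦ a • m`.  It is bijective exactly when the canonical algebra
map `A → End_B(M)` is an isomorphism, i.e. when the double centralizer property holds. -/
noncomputable def toDoubleCentralizer (A : Type u) [Ring A] (M : Type u) [AddCommGroup M]
    [Module A M] : A →+* Module.End (Module.End A M) M where
  toFun a :=
    { toFun := fun m => a • m
      map_add' := fun m n => smul_add a m n
      map_smul' := fun g m => (g.map_smul a m).symm }
  map_one' := LinearMap.ext fun m => one_smul A m
  map_mul' a b := LinearMap.ext fun m => mul_smul a b m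
  map_zero' := LinearMap.ext fun m => zero_smul A m
  map_add' a b := LinearMap.ext fun m => add_smul a b m

/-- `A` is a QF-1 algebra: every faithful finitely generated left `A`-module has the
double centralizer property. -/
def IsQF1 (A : Type u) [Ring A] : Prop :=
  ∀ (M : Type u) [AddCommGroup M] [Module A M], Module.Finite A M →
    (∀ a : A, (∀ m : M, a • m = 0) → a = 0) →
    Function.Bijective (toDoubleCentralizer A M)

def traceIdeal (A P : Type*) [Ring A] [AddCommGroup P] [Module A P] : Submodule A A :=
  ⨆ f : P →ₗ[A] A, LinearMap.range f

theorem Module.Injective.of_retraction {R : Type*} {Q N : Type u} [Ring R] [AddCommGroup Q]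
    [Module R Q] [AddCommGroup N] [Module R N] [Module.Injective R Q] (s : N →ₗ[R] Q)
    (r : Q →ₗ[R] N) (hrs : r ∘ₗ s = LinearMap.id) : Module.Injective R N where
  out _ _ _ _ _ _ f hf g :=
    have ⟨e, he⟩ := Module.Injective.out f hf (s ∘ₗ g)
    ⟨r ∘ₗ e, fun x => by simpa [he] using DFunLike.congr_fun hrs (g x)⟩

theorem exists_finset_faithful_of_isArtinianRing {A M : Type*} [Ring A] [IsArtinianRing A]
    [AddCommGroup M] [Module A M] (hM : ∀ a : A, (∀ m : M, a • m = 0) → a = 0) :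
    ∃ s : Finset M, ∀ a : A, (∀ m ∈ s, a • m = 0) → a = 0 := by
  classical
  let K (s : Finset M) : Submodule A A :=
    ⨅ m ∈ s, LinearMap.ker (LinearMap.toSpanSingleton A M m)
  have mem_K {s : Finset M} {a : A} : a ∈ K s ↔ ∀ m ∈ s, a • m = 0 := by simp [K]
  obtain ⟨_, ⟨s, rfl⟩, hmin⟩ := IsArtinian.set_has_minimal (Set.range K) ⟨_, ∅, rfl⟩
  refine ⟨s, fun a ha => hM a fun m => ?_⟩
  have hle : K (insert m s) ≤ K s := fun b hb => mem_K.2 fun n hn => mem_K.1 hb n (by simp [hn])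
  have heq : K (insert m s) = K s := eq_of_le_of_not_lt hle (hmin _ ⟨_, rfl⟩)
  exact mem_K.1 (heq ▸ mem_K.2 ha) m (Finset.mem_insert_self m s)

section TraceIdeal

variable {A P : Type u} [Ring A] [AddCommGroup P] [Module A P]

theorem apply_mem_traceIdeal (f : P →ₗ[A] A) (p : P) : f p ∈ traceIdeal A P :=
  Submodule.mem_iSup_of_mem f (LinearMap.mem_range_self f p)

theorem range_le_traceIdeal {ι : Type*} [Finite ι] (r : (ι → P) →ₗ[A] A) :
    LinearMap.range r ≤ traceIdeal A P := by
  classical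
  have := Fintype.ofFinite ι
  rintro _ ⟨x, rfl⟩
  rw [← Finset.univ_sum_single x, map_sum]
  exact Submodule.sum_mem _ fun i _ => apply_mem_traceIdeal (r ∘ₗ LinearMap.single A _ i) (x i)

theorem eq_zero_of_forall_apply_mul_eq_zero (h1 : (1 : A) ∈ traceIdeal A P) {a : A}
    (ha : ∀ (f : P →ₗ[A] A) (p : P), f p * a = 0) : a = 0 := by
  have key : ∀ t ∈ traceIdeal A P, t * a = 0 := fun t ht =>
    Submodule.iSup_induction _ (motive := (· * a = 0)) ht (fun f _ ⟨p, hp⟩ => hp ▸ ha f p)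
      (zero_mul a) fun x y hx hy => by rw [add_mul, hx, hy, add_zero]
  simpa using key 1 h1

theorem Module.Injective.of_one_mem_traceIdeal [Module.Injective A P]
    (h1 : (1 : A) ∈ traceIdeal A P) : Module.Injective A A := by
  obtain ⟨c, hc, hsum⟩ := (Submodule.mem_iSup_iff_exists_finsupp _ _).1 h1
  choose p hp using hc
  rw [Finsupp.sum] at hsum
  let s : A →ₗ[A] (c.support → P) := LinearMap.pi fun f => LinearMap.toSpanSingleton A P (p f)
  let r : (c.support → P) →ₗ[A] A :=
    ∑ f : c.support, (f : P →ₗ[A] A) ∘ₗ LinearMap.proj f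
  refine .of_retraction s r (LinearMap.ext_ring ?_)
  simpa [s, r, hp, Finset.sum_attach c.support c] using hsum

theorem one_mem_traceIdeal_of_faithful [IsArtinianRing A] [Module.Injective A A]
    (hP : ∀ a : A, (∀ p : P, a • p = 0) → a = 0) : (1 : A) ∈ traceIdeal A P := by
  obtain ⟨s, hs⟩ := exists_finset_faithful_of_isArtinianRing hP
  let e : A →ₗ[A] (s → P) := LinearMap.pi fun m => LinearMap.toSpanSingleton A P m
  have he : Function.Injective e := by
    rw [← LinearMap.ker_eq_bot, LinearMap.ker_eq_bot']
    exact fun a ha => hs a fun m hm => congr_fun ha ⟨m, hm⟩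
  obtain ⟨r, hr⟩ := Module.Injective.extension_property A A A _ e he LinearMap.id
  exact range_le_traceIdeal r ⟨e 1, DFunLike.congr_fun hr 1⟩

end TraceIdeal

theorem subsingleton_of_isQF1 {A M N : Type u} [Ring A] [AddCommGroup M] [Module A M]
    [AddCommGroup N] [Module A N] [Module.Finite A M] [Module.Finite A N] (hA : IsQF1 A)
    (hM : ∀ a : A, (∀ m : M, a • m = 0) → a = 0) (hMN : ∀ g : M →ₗ[A] N, g = 0)
    (hNM : ∀ g : N →ₗ[A] M, g = 0) : Subsingleton N := by
  have hMN_apply (g : Module.End A (M × N)) (m : M) : (g (m, 0)).2 = 0 :=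
    LinearMap.congr_fun (hMN (LinearMap.snd A M N ∘ₗ g ∘ₗ LinearMap.inl A M N)) m
  have hNM_apply (g : Module.End A (M × N)) (n : N) : (g (0, n)).1 = 0 :=
    LinearMap.congr_fun (hNM (LinearMap.fst A M N ∘ₗ g ∘ₗ LinearMap.inr A M N)) n
  -- With no maps between `M` and `N`, the projection onto `M` commutes with all endomorphisms.
  let π : Module.End (Module.End A (M × N)) (M × N) :=
    { toFun := fun x => (x.1, 0)
      map_add' := fun x y => by simp
      map_smul' := fun g x => by
        have hg : g x = g (x.1, 0) + g (0, x.2) := by rw [← map_add, Prod.mk_add_mk]; simp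
        ext
        · simp [hg, hNM_apply]
        · simp [hMN_apply] }
  have hMN_faithful : ∀ a : A, (∀ x : M × N, a • x = 0) → a = 0 := fun a ha =>
    hM a fun m => congr_arg Prod.fst (ha (m, 0))
  obtain ⟨a, ha⟩ := (hA (M × N) inferInstance hMN_faithful).2 π
  have ha_apply (x : M × N) : a • x = (x.1, 0) := LinearMap.congr_fun ha x
  have ha_one : a = 1 := sub_eq_zero.1 <| hM _ fun m => by
    rw [sub_smul, one_smul, sub_eq_zero]
    simpa using congr_arg Prod.fst (ha_apply (m, 0))
  refine ⟨fun n n' => ?_⟩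
  have hzero (n : N) : n = 0 := by simpa [ha_one] using congr_arg Prod.snd (ha_apply (0, n))
  rw [hzero n, hzero n']

section TraceIdealQuotient

variable {A P : Type u} [Ring A] [AddCommGroup P] [Module A P] [Module.Projective A P]

theorem linearMap_to_quotient_traceIdeal_eq_zero (ψ : P →ₗ[A] A ⧸ traceIdeal A P) :
    ψ = 0 := by
  obtain ⟨φ, rfl⟩ := Module.projective_lifting_property (traceIdeal A P).mkQ ψ
    (Submodule.mkQ_surjective _)
  ext p
  simpa using apply_mem_traceIdeal φ p

theorem linearMap_from_quotient_traceIdeal_eq_zero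
    (hdual : ∀ a : A, (∀ (f : P →ₗ[A] A) (p : P), f p * a = 0) → a = 0)
    (χ : A ⧸ traceIdeal A P →ₗ[A] P) : χ = 0 := by
  set p₀ := χ (Submodule.Quotient.mk 1)
  have hχ (b : A) : χ (Submodule.Quotient.mk b) = b • p₀ := by
    rw [← map_smul, ← Submodule.Quotient.mk_smul, smul_eq_mul, mul_one]
  -- `p₀` is killed by `τ(P)`, so every `φ p₀` is right-annihilated by all `f p`.
  have hp₀ : p₀ = 0 := by
    by_contra h
    obtain ⟨φ, hφ⟩ := Module.Projective.exists_dual_ne_zero A h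
    refine hφ (hdual _ fun f p => ?_)
    rw [← smul_eq_mul, ← map_smul, ← hχ, (Submodule.Quotient.mk_eq_zero _).2
      (apply_mem_traceIdeal f p), map_zero, map_zero]
  exact Submodule.linearMap_qext _ (LinearMap.ext_ring (by simpa using hp₀))

theorem one_mem_traceIdeal_of_isQF1 [Module.Finite A P] (hA : IsQF1 A)
    (hP : ∀ a : A, (∀ p : P, a • p = 0) → a = 0)
    (hdual : ∀ a : A, (∀ (f : P →ₗ[A] A) (p : P), f p * a = 0) → a = 0) :
    (1 : A) ∈ traceIdeal A P := by
  have := subsingleton_of_isQF1 hA hP linearMap_to_quotient_traceIdeal_eq_zero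
    (linearMap_from_quotient_traceIdeal_eq_zero hdual)
  rw [Submodule.Quotient.subsingleton_iff] at this
  exact this ▸ Submodule.mem_top

end TraceIdealQuotient

/-- Let `A` be a finite-dimensional QF-1 `k`-algebra and `P` a faithful
projective-injective finitely generated left `A`-module.  Then `A` is self-injective
iff `Hom_A(P, A)` (with right `A`-action by postmultiplication) is a faithful right
`A`-module. -/
theorem qf1_selfinjective_iff
    (k A P : Type u) [Field k] [Ring A] [Algebra k A] [FiniteDimensional k A]
    [AddCommGroup P] [Module A P] [Module.Finite A P]
    (hqf1 : IsQF1 A)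
    (hfaithful : ∀ a : A, (∀ p : P, a • p = 0) → a = 0)
    (hproj : Module.Projective A P) (hinj : Module.Injective A P) :
    Module.Injective A A ↔
      (∀ a : A, (∀ (f : P →ₗ[A] A) (p : P), f p * a = 0) → a = 0) := by
  constructor
  · intro _ a
    have : IsArtinianRing A := .of_finite k A
    exact eq_zero_of_forall_apply_mul_eq_zero (one_mem_traceIdeal_of_faithful hfaithful)
  · intro hdual
    exact .of_one_mem_traceIdeal (one_mem_traceIdeal_of_isQF1 hqf1 hfaithful hdual)
end

section
/- Let k be a field, A a finite-dimensional k-algebra, and P a projective-injective finitely generated left A-module such that Hom_A(P, A), with right A-action by postmultiplication, is a faithful right A-module. Then DP = Hom_k(P, k) is a direct summand of a finite direct sum of copies of Hom_A(P, A) as a right A-module, i.e. DP ∈ add Hom_A(P, A). -/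
universe u

open MulOpposite

set_option synthInstance.maxHeartbeats 400000
set_option maxHeartbeats 1000000

section RightDual
variable (k A P : Type u) [Field k] [Ring A] [Algebra k A]
  [AddCommGroup P] [Module A P] [Module k P] [IsScalarTower k A P]

/-- Scalar multiplication by `a : A` on `P`, as a `k`-linear map. -/
noncomputable def smulKLinear (a : A) : P →ₗ[k] P where
  toFun p := a • p
  map_add' := smul_add a
  map_smul' c p := by
    show a • c • p = c • a • p
    rw [← algebraMap_smul A c p, ← algebraMap_smul A c (a • p), smul_smul, smul_smul,
      Algebra.commutes]

/-- The right `A`-action `(φ · a) p = φ (a • p)` on `D(P) = Hom_k(P, k)`, as a ring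
homomorphism `Aᵐᵒᵖ → End_k(D(P))`. -/
noncomputable def dualRingHom : Aᵐᵒᵖ →+* Module.End k (Module.Dual k P) where
  toFun x := (smulKLinear k A P x.unop).dualMap
  map_one' := by ext φ p; simp [smulKLinear]
  map_mul' x y := by ext φ p; simp [smulKLinear, mul_smul]
  map_zero' := by ext φ p; simp [smulKLinear]
  map_add' x y := by ext φ p; simp [smulKLinear, add_smul]

/-- `D(P)` as a right `A`-module, i.e. as a module over `Aᵐᵒᵖ`. -/
noncomputable instance : Module Aᵐᵒᵖ (Module.Dual k P) :=
  Module.compHom _ (dualRingHom k A P)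
end RightDual

/-!
As `P` is injective, it is a direct summand, hence a quotient, of a power of `D(A)`; dualizing,
`DP` embeds into a power of `A_A`, and by faithfulness `A_A` embeds into a power of
`Hom_A(P, A)`. As `P` is projective, `DP` is an injective right `A`-module: a `k`-linear
retraction, averaged over a projective basis of `P`, becomes `A`-linear. So the composite
embedding of `DP` into a power of `Hom_A(P, A)` splits.
-/

section DualRightModule
variable {k A P : Type u} [Field k] [Ring A] [Algebra k A]
  [AddCommGroup P] [Module A P] [Module k P] [IsScalarTower k A P]

theorem dual_smul_apply (z : Aᵐᵒᵖ) (φ : Module.Dual k P) (p : P) :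
    (z • φ) p = φ (z.unop • p) :=
  rfl

instance dual_isScalarTower : IsScalarTower k Aᵐᵒᵖ (Module.Dual k P) where
  smul_assoc c z φ := by
    ext p
    change φ ((c • z.unop) • p) = c • φ (z.unop • p)
    rw [smul_assoc, map_smul]

theorem exists_linearMap_eq_of_smul_eq [Module.Projective A P] {Y : Type*} [AddCommGroup Y]
    [Module k Y] [Module Aᵐᵒᵖ Y] [IsScalarTower k Aᵐᵒᵖ Y] (H : Y →ₗ[k] Module.Dual k P) :
    ∃ ρ : Y →ₗ[Aᵐᵒᵖ] Module.Dual k P,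
      ∀ y, (∀ z : Aᵐᵒᵖ, H (z • y) = z • H y) → ρ y = H y := by
  obtain ⟨s, hs⟩ := Module.Projective.out (R := A) (P := P)
  -- average `H` over the projective basis `p = ∑ₓ s p x • x` of `P`
  let T (y : Y) : A →ₗ[k] Module.Dual k P :=
    H ∘ₗ (LinearMap.toSpanSingleton Aᵐᵒᵖ Y y).restrictScalars k ∘ₗ
      (opLinearEquiv k).toLinearMap
  let ρ₀ (y : Y) : Module.Dual k P :=
    Finsupp.lsum k (fun x => Module.Dual.eval k P x ∘ₗ T y) ∘ₗ s.restrictScalars k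
  have hρ₀ (y : Y) (p : P) : ρ₀ y p = (s p).sum fun x a => H (op a • y) x := rfl
  refine ⟨{ toFun := ρ₀, map_add' := ?_, map_smul' := ?_ }, fun y hy => ?_⟩
  · intro y₁ y₂
    ext p
    simp only [hρ₀, LinearMap.add_apply, ← Finsupp.sum_add, smul_add, map_add]
  · intro z y
    ext p
    rw [RingHom.id_apply, dual_smul_apply, hρ₀, hρ₀, map_smul,
      Finsupp.sum_smul_index' (by simp)]
    simp only [smul_eq_mul, op_mul, op_unop, mul_smul]
  · ext p
    change ρ₀ y p = H y p
    calc ρ₀ y p = (s p).sum fun x a => H y (a • x) := by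
          simp only [hρ₀, hy, dual_smul_apply, unop_op]
      _ = H y (Finsupp.linearCombination A id (s p)) := by
          rw [Finsupp.linearCombination_apply, map_finsuppSum]; rfl
      _ = H y p := by rw [hs p]

theorem injective_dual_of_projective [Module.Projective A P] :
    Module.Injective Aᵐᵒᵖ (Module.Dual k P) where
  out X Y _ _ _ _ f hf g := by
    let _ : Module k X := Module.compHom X (algebraMap k Aᵐᵒᵖ)
    let _ : Module k Y := Module.compHom Y (algebraMap k Aᵐᵒᵖ)
    have : IsScalarTower k Aᵐᵒᵖ X := ⟨fun _ _ _ => by rw [Algebra.smul_def, mul_smul]; rfl⟩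
    have : IsScalarTower k Aᵐᵒᵖ Y := ⟨fun _ _ _ => by rw [Algebra.smul_def, mul_smul]; rfl⟩
    obtain ⟨f', hf'⟩ := (f.restrictScalars k).exists_leftInverse_of_injective
      (LinearMap.ker_eq_bot.mpr hf)
    have hH (x : X) : (g.restrictScalars k ∘ₗ f') (f x) = g x :=
      congrArg g (LinearMap.congr_fun hf' x)
    obtain ⟨ρ, hρ⟩ := exists_linearMap_eq_of_smul_eq (A := A) (g.restrictScalars k ∘ₗ f')
    refine ⟨ρ, fun x => (hρ (f x) fun z => ?_).trans (hH x)⟩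
    rw [← map_smul, hH, hH, map_smul]

end DualRightModule

section LeftDual
variable (k A : Type u) [Field k] [Ring A] [Algebra k A]

noncomputable def leftDualRingHom : A →+* Module.End k (Module.Dual k A) where
  toFun a := (LinearMap.mulRight k a).dualMap
  map_one' := by ext ψ b; simp
  map_mul' x y := by ext ψ b; simp [mul_assoc]
  map_zero' := by ext ψ b; simp
  map_add' x y := by ext ψ b; simp [mul_add]

noncomputable abbrev leftDualModule : Module A (Module.Dual k A) :=
  Module.compHom _ (leftDualRingHom k A)

attribute [local instance] leftDualModule

variable {k A}

theorem leftDual_smul_apply (a : A) (ψ : Module.Dual k A) (b : A) : (a • ψ) b = ψ (b * a) :=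
  rfl

instance leftDual_isScalarTower : IsScalarTower k A (Module.Dual k A) where
  smul_assoc c a ψ := by
    ext b
    change ψ (b * c • a) = c • ψ (b * a)
    rw [mul_smul_comm, map_smul]

variable {P : Type u} [AddCommGroup P] [Module A P] [Module k P] [IsScalarTower k A P]

noncomputable def dualCoind (φ : Module.Dual k P) : P →ₗ[A] Module.Dual k A where
  toFun p := φ ∘ₗ (LinearMap.toSpanSingleton A P p).restrictScalars k
  map_add' p q := by ext b; simp
  map_smul' a p := by ext b; simp [leftDual_smul_apply, mul_smul]

theorem dualCoind_apply (φ : Module.Dual k P) (p : P) (b : A) : dualCoind φ p b = φ (b • p) :=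
  rfl

theorem exists_injective_pi_leftDual [FiniteDimensional k P] :
    ∃ r, ∃ u : P →ₗ[A] (Fin r → Module.Dual k A), Function.Injective u := by
  let b := Module.finBasis k P
  refine ⟨_, LinearMap.pi fun i => dualCoind (b.coord i), ?_⟩
  rw [← LinearMap.ker_eq_bot, LinearMap.ker_eq_bot']
  intro p hp
  refine b.forall_coord_eq_zero_iff.mp fun i => ?_
  simpa [dualCoind_apply] using LinearMap.congr_fun (congrFun hp i) 1

theorem exists_surjective_pi_leftDual [FiniteDimensional k P] (hinj : Module.Injective A P) :
    ∃ r, ∃ v : (Fin r → Module.Dual k A) →ₗ[A] P, Function.Surjective v := by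
  obtain ⟨r, u, hu⟩ := exists_injective_pi_leftDual (k := k) (A := A) (P := P)
  obtain ⟨v, hv⟩ := hinj.out u hu LinearMap.id
  exact ⟨r, v, fun p => ⟨u p, hv p⟩⟩

variable [FiniteDimensional k A]

noncomputable def dualTranspose (w : Module.Dual k A →ₗ[A] P) :
    Module.Dual k P →ₗ[Aᵐᵒᵖ] Aᵐᵒᵖ where
  toFun φ := op ((Module.evalEquiv k A).symm (φ ∘ₗ w.restrictScalars k))
  map_add' φ₁ φ₂ := by rw [LinearMap.add_comp, map_add, op_add]
  map_smul' z φ := by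
    apply unop_injective
    rw [RingHom.id_apply, smul_eq_mul, unop_mul, unop_op, unop_op, LinearEquiv.symm_apply_eq]
    ext ψ
    rw [Module.evalEquiv_apply, Module.Dual.eval_apply, ← leftDual_smul_apply,
      Module.apply_evalEquiv_symm_apply]
    simp [dual_smul_apply, map_smul]

theorem apply_unop_dualTranspose (w : Module.Dual k A →ₗ[A] P) (φ : Module.Dual k P)
    (ψ : Module.Dual k A) : ψ (dualTranspose w φ).unop = φ (w ψ) :=
  Module.apply_evalEquiv_symm_apply k A ψ _

theorem exists_injective_dual_pi_of_surjective {r : ℕ}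
    (v : (Fin r → Module.Dual k A) →ₗ[A] P) (hv : Function.Surjective v) :
    ∃ σ : Module.Dual k P →ₗ[Aᵐᵒᵖ] (Fin r → Aᵐᵒᵖ), Function.Injective σ := by
  refine ⟨LinearMap.pi fun i =>
    dualTranspose (v ∘ₗ LinearMap.single A (fun _ => Module.Dual k A) i), ?_⟩
  rw [← LinearMap.ker_eq_bot, LinearMap.ker_eq_bot']
  intro φ hφ
  have hφv (x : Fin r → Module.Dual k A) : φ (v x) = 0 := by
    rw [← Finset.univ_sum_single x, map_sum, map_sum]
    refine Finset.sum_eq_zero fun i _ => ?_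
    simpa [apply_unop_dualTranspose] using congrArg (fun a => x i a.unop) (congrFun hφ i)
  ext p
  obtain ⟨x, rfl⟩ := hv p
  exact hφv x

theorem exists_injective_dual_pi [FiniteDimensional k P] (hinj : Module.Injective A P) :
    ∃ r, ∃ σ : Module.Dual k P →ₗ[Aᵐᵒᵖ] (Fin r → Aᵐᵒᵖ), Function.Injective σ :=
  let ⟨r, v, hv⟩ := exists_surjective_pi_leftDual hinj
  ⟨r, exists_injective_dual_pi_of_surjective v hv⟩

end LeftDual

theorem exists_injective_pi_of_faithful {K R M : Type*} [CommSemiring K] [Ring R]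
    [AddCommGroup M] [Module R M] [Module K M] [SMulCommClass R K M] [Module.Finite K M]
    (hM : ∀ r : R, (∀ m : M, r • m = 0) → r = 0) :
    ∃ n, ∃ J : R →ₗ[R] (Fin n → M), Function.Injective J := by
  obtain ⟨n, s, hs⟩ := Module.Finite.exists_fin (R := K) (M := M)
  refine ⟨n, LinearMap.pi fun i => LinearMap.toSpanSingleton R M (s i), ?_⟩
  rw [← LinearMap.ker_eq_bot, LinearMap.ker_eq_bot']
  intro r hr
  refine hM r fun m => ?_
  have hm : m ∈ Submodule.span K (Set.range s) := hs ▸ Submodule.mem_top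
  induction hm using Submodule.span_induction with
  | mem x hx =>
    obtain ⟨i, rfl⟩ := hx
    exact congrFun hr i
  | zero => exact smul_zero r
  | add x y _ _ hx hy => rw [smul_add, hx, hy, add_zero]
  | smul c x _ hx => rw [smul_comm, hx, smul_zero]

theorem memAdd_of_injective {R M X : Type u} [Ring R] [AddCommGroup M] [Module R M]
    [AddCommGroup X] [Module R X] [Module.Injective R X] {ι : Type*} [Fintype ι]
    (f : X →ₗ[R] (ι → M)) (hf : Function.Injective f) : MemAdd R M X := by
  let e := LinearEquiv.funCongrLeft R M (Fintype.equivFin ι).symm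
  obtain ⟨p, hp⟩ :=
    Module.Injective.out (e.toLinearMap ∘ₗ f) (e.injective.comp hf) LinearMap.id
  exact ⟨_, e.toLinearMap ∘ₗ f, p, LinearMap.ext hp⟩

/-- If `P` is a projective-injective finitely generated left module over a
finite-dimensional `k`-algebra `A` such that `Hom_A(P, A)` (with right `A`-action by
postmultiplication) is a faithful right `A`-module, then `DP = Hom_k(P, k)` is a direct
summand of a finite direct sum of copies of `Hom_A(P, A)` as a right `A`-module,
i.e. `DP ∈ add Hom_A(P, A)`. -/
theorem dual_memAdd_hom
    (k A P : Type u) [Field k] [Ring A] [Algebra k A] [FiniteDimensional k A]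
    [AddCommGroup P] [Module A P] [Module k P] [IsScalarTower k A P] [Module.Finite A P]
    (hproj : Module.Projective A P) (hinj : Module.Injective A P)
    (hfaithful : ∀ a : A, (∀ (f : P →ₗ[A] A) (p : P), f p * a = 0) → a = 0) :
    MemAdd Aᵐᵒᵖ (P →ₗ[A] A) (Module.Dual k P) := by
  have : Module.Finite k P := Module.Finite.trans A P
  have : Module.Finite k (P →ₗ[A] A) := Module.Finite.of_injective
    (LinearMap.restrictScalarsₗ k A P A k) (LinearMap.restrictScalars_injective k)
  have : Module.Injective Aᵐᵒᵖ (Module.Dual k P) := injective_dual_of_projective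
  obtain ⟨r, σ, hσ⟩ := exists_injective_dual_pi (k := k) hinj
  obtain ⟨m, J, hJ⟩ := exists_injective_pi_of_faithful (K := k) (M := P →ₗ[A] A) fun z hz =>
    unop_injective <| hfaithful z.unop fun f p => by simpa using LinearMap.congr_fun (hz f) p
  let e := (LinearEquiv.curry Aᵐᵒᵖ (P →ₗ[A] A) (Fin r) (Fin m)).symm
  exact memAdd_of_injective (e.toLinearMap ∘ₗ LinearMap.piMap (fun _ => J) ∘ₗ σ)
    (e.injective.comp ((Function.Injective.piMap fun _ => hJ).comp hσ))
end
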